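/- arXiv:2210.00115 — 4 statements merged into one kernel-verified Lean document; each statement's English description precedes it below -/
import Mathlib

section
/- Let G be an infinite group with a proper right-invariant distance. (1) If a horofunction j ∈ ∂G satisfies inf_{g ∈ G} j(g) = −∞, then its horoball {x ∈ G : j(x) < 0} contains balls of arbitrarily large radius, i.e. for every R > 0 there is g ∈ G with B_R(g) ⊆ {j < 0}. (2) Consequently, if G is generated by a finite set 𝒮 and is equipped with the word (ℓ¹) distance d_{ℓ¹}(g,h) = inf{n ∈ ℕ : gh^{-1} is a product of n elements of 𝒮 ∪ 𝒮^{-1}}, then every horoball of G contains balls of arbitrarily large radius. -/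
/-!
Every element of the closure of the Busemann maps `b_g` is `1`-Lipschitz, so a horofunction
taking a value `< -R` at `g` is negative on `B_R(g)`. For a word metric the balls are finite, so
a horofunction `j`, which is not itself a Busemann map, is approximated on the ball
`B̄_n(1)` by maps `b_g` with `d(g, 1) > n`. Walking from `1` towards `g` along a geodesic word
for `n` steps reaches `y` with `d(y, 1) ≤ n` and `b_g(y) ≤ -n`, so `j(y) ≈ -n` and `j` is
unbounded below.
-/

open Metric Filter Topology

/-- The Busemann map `b_g : x ↦ d(g,x) - d(g,1)`. -/
noncomputable def busemann (G : Type*) [Group G] [MetricSpace G] (g : G) : C(G, ℝ) :=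
  ⟨fun x => dist g x - dist g (1 : G),
    (continuous_const.dist continuous_id).sub continuous_const⟩

/-- A horofunction on `G`. -/
def IsHorofunction (G : Type*) [Group G] [MetricSpace G] (j : C(G, ℝ)) : Prop :=
  j ∈ closure (Set.range (busemann G)) ∧ j ∉ Set.range (busemann G)

/-- A horoball is a sublevel set `{x : j x < 0}` of a horofunction. -/
def IsHoroball (G : Type*) [Group G] [MetricSpace G] (H : Set G) : Prop :=
  ∃ j : C(G, ℝ), IsHorofunction G j ∧ H = {x : G | j x < 0}

lemma busemann_apply {G : Type*} [Group G] [MetricSpace G] (g x : G) :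
    busemann G g x = dist g x - dist g 1 := rfl

lemma sub_le_dist_of_mem_closure_range_busemann {G : Type*} [Group G] [MetricSpace G]
    {j : C(G, ℝ)} (hj : j ∈ closure (Set.range (busemann G))) (x y : G) :
    j x - j y ≤ dist x y := by
  have hclosed : IsClosed {f : C(G, ℝ) | f x - f y ≤ dist x y} :=
    isClosed_le ((continuous_eval_const x).sub (continuous_eval_const y)) continuous_const
  refine closure_minimal ?_ hclosed hj
  rintro _ ⟨g, rfl⟩
  show dist g x - dist g 1 - (dist g y - dist g 1) ≤ dist x y
  linarith [dist_triangle g y x, dist_comm y x]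

lemma exists_ball_subset_setOf_neg_of_mem_closure_range_busemann {G : Type*} [Group G]
    [MetricSpace G] {j : C(G, ℝ)} (hj : j ∈ closure (Set.range (busemann G)))
    (hinf : ∀ c : ℝ, ∃ g : G, j g < c) (R : ℝ) :
    ∃ g : G, ball g R ⊆ {x : G | j x < 0} := by
  obtain ⟨g, hg⟩ := hinf (-R)
  refine ⟨g, fun x hx => show j x < 0 from ?_⟩
  linarith [sub_le_dist_of_mem_closure_range_busemann hj x g, mem_ball.mp hx]

lemma ContinuousMap.exists_dist_lt_of_mem_closure {X Y : Type*} [TopologicalSpace X]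
    [PseudoMetricSpace Y] {T : Set C(X, Y)} {f : C(X, Y)} (hf : f ∈ closure T) {F : Set X}
    (hF : F.Finite) {ε : ℝ} (hε : 0 < ε) :
    ∃ f' ∈ T, ∀ p ∈ F, dist (f' p) (f p) < ε := by
  have hU : IsOpen (⋂ p ∈ F, (fun f' : C(X, Y) => f' p) ⁻¹' ball (f p) ε) :=
    hF.isOpen_biInter fun p _ => isOpen_ball.preimage (continuous_eval_const p)
  have hfU : f ∈ ⋂ p ∈ F, (fun f' : C(X, Y) => f' p) ⁻¹' ball (f p) ε :=
    Set.mem_iInter₂.mpr fun p _ => mem_ball_self hε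
  obtain ⟨f', hf'U, hf'T⟩ := _root_.mem_closure_iff.mp hf _ hU hfU
  exact ⟨f', hf'T, fun p hp => Set.mem_iInter₂.mp hf'U p hp⟩

lemma IsHorofunction.mem_closure_busemann_image_compl {G : Type*} [Group G] [MetricSpace G]
    {j : C(G, ℝ)} (hj : IsHorofunction G j) {K : Set G} (hK : K.Finite) :
    j ∈ closure (busemann G '' Kᶜ) := by
  have hopen : IsOpen (busemann G '' K)ᶜ := ((hK.image _).isClosed).isOpen_compl
  have hjK : j ∈ (busemann G '' K)ᶜ := fun ⟨g, _, hg⟩ => hj.2 ⟨g, hg⟩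
  refine closure_mono ?_ (hopen.inter_closure ⟨hjK, hj.1⟩)
  rintro _ ⟨hK', g, rfl⟩
  exact ⟨g, fun hg => hK' ⟨g, hg, rfl⟩, rfl⟩

def IsWordDist {G : Type*} [Group G] [MetricSpace G] (S : Finset G) : Prop :=
  ∀ g h : G, dist g h = sInf {r : ℝ | ∃ l : List G,
    (∀ s ∈ l, s ∈ (S : Set G) ∪ (S : Set G)⁻¹) ∧ l.prod = g * h⁻¹ ∧ r = l.length}

namespace IsWordDist

variable {G : Type*} [Group G] [MetricSpace G] {S : Finset G}

lemma dist_le_length (hd : IsWordDist S) {g h : G} {l : List G}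
    (hl : ∀ s ∈ l, s ∈ (S : Set G) ∪ (S : Set G)⁻¹) (hlp : l.prod = g * h⁻¹) :
    dist g h ≤ l.length := by
  rw [hd]
  refine csInf_le ⟨0, ?_⟩ ⟨l, hl, hlp, rfl⟩
  rintro r ⟨l', -, -, rfl⟩
  exact Nat.cast_nonneg _

lemma exists_list_length_eq_dist (hd : IsWordDist S) (hS : Subgroup.closure (S : Set G) = ⊤)
    (g h : G) :
    ∃ l : List G, (∀ s ∈ l, s ∈ (S : Set G) ∪ (S : Set G)⁻¹) ∧ l.prod = g * h⁻¹ ∧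
      dist g h = l.length := by
  have hword : ∃ n, ∃ l : List G,
      (∀ s ∈ l, s ∈ (S : Set G) ∪ (S : Set G)⁻¹) ∧ l.prod = g * h⁻¹ ∧ l.length = n := by
    have hmem : g * h⁻¹ ∈ Submonoid.closure ((S : Set G) ∪ (S : Set G)⁻¹) := by
      rw [← Subgroup.closure_toSubmonoid, hS]
      trivial
    obtain ⟨l, hl, hlp⟩ := Submonoid.exists_list_of_mem_closure hmem
    exact ⟨_, l, hl, hlp, rfl⟩
  classical
  obtain ⟨l₀, hl₀, hl₀p, hl₀n⟩ := Nat.find_spec hword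
  refine ⟨l₀, hl₀, hl₀p, (hd.dist_le_length hl₀ hl₀p).antisymm ?_⟩
  rw [hd]
  refine le_csInf ⟨_, l₀, hl₀, hl₀p, rfl⟩ ?_
  rintro r ⟨l, hl, hlp, rfl⟩
  exact_mod_cast hl₀n ▸ Nat.find_min' hword ⟨l, hl, hlp, rfl⟩

lemma one_le_dist (hd : IsWordDist S) (hS : Subgroup.closure (S : Set G) = ⊤) {g h : G}
    (hne : g ≠ h) : 1 ≤ dist g h := by
  obtain ⟨l, -, hlp, hlen⟩ := hd.exists_list_length_eq_dist hS g h
  have hl : l ≠ [] := by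
    rintro rfl
    exact hne (mul_inv_eq_one.mp hlp.symm)
  rw [hlen]
  exact_mod_cast List.length_pos_iff.mpr hl

lemma discreteTopology (hd : IsWordDist S) (hS : Subgroup.closure (S : Set G) = ⊤) :
    DiscreteTopology G :=
  DiscreteTopology.of_forall_le_dist one_pos fun _ _ hne => hd.one_le_dist hS hne

lemma exists_dist_le_and_dist_le_sub (hd : IsWordDist S) (hS : Subgroup.closure (S : Set G) = ⊤)
    {g h : G} {n : ℕ} (hn : n ≤ dist g h) :
    ∃ y : G, dist y h ≤ n ∧ dist g y ≤ dist g h - n := by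
  obtain ⟨l, hl, hlp, hlen⟩ := hd.exists_list_length_eq_dist hS g h
  have hnl : n ≤ l.length := by exact_mod_cast hlen ▸ hn
  set k := l.length - n
  refine ⟨(l.drop k).prod * h, ?_, ?_⟩
  · have := hd.dist_le_length (l := l.drop k) (fun s hs => hl s (List.mem_of_mem_drop hs))
      (mul_inv_cancel_right _ h).symm
    rwa [List.length_drop, Nat.sub_sub_self hnl] at this
  · have hprod : (l.take k).prod = g * ((l.drop k).prod * h)⁻¹ := by
      have hg : g = (l.take k).prod * (l.drop k).prod * h := by
        rw [← List.prod_append, List.take_append_drop, hlp, inv_mul_cancel_right]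
      rw [hg]
      group
    have := hd.dist_le_length (fun s hs => hl s (List.mem_of_mem_take hs)) hprod
    rw [List.length_take, min_eq_left (Nat.sub_le _ _), Nat.cast_sub hnl] at this
    linarith

end IsWordDist

lemma IsHorofunction.exists_lt_of_isWordDist {G : Type*} [Group G] [MetricSpace G]
    [ProperSpace G] {j : C(G, ℝ)} (hj : IsHorofunction G j) {S : Finset G} (hd : IsWordDist S)
    (hS : Subgroup.closure (S : Set G) = ⊤) (c : ℝ) :
    ∃ y : G, j y < c := by
  have := hd.discreteTopology hS
  obtain ⟨n, hn⟩ := exists_nat_ge (1 - c)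
  have hK : (closedBall (1 : G) n).Finite := (isCompact_closedBall _ _).finite_of_discrete
  obtain ⟨_, ⟨g, hgK, rfl⟩, hgj⟩ := ContinuousMap.exists_dist_lt_of_mem_closure
    (hj.mem_closure_busemann_image_compl hK) hK one_pos
  have hgn : (n : ℝ) ≤ dist g 1 := le_of_lt (not_le.mp hgK)
  obtain ⟨y, hy1, hgy⟩ := hd.exists_dist_le_and_dist_le_sub hS hgn
  refine ⟨y, ?_⟩
  have hjy := (abs_lt.mp (hgj y (mem_closedBall.mpr hy1))).1
  rw [busemann_apply] at hjy
  linarith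

theorem horoball_contains_large_balls_general
    {G : Type*} [Group G] [MetricSpace G] [ProperSpace G] :
    (∀ j : C(G, ℝ), IsHorofunction G j → (∀ c : ℝ, ∃ g : G, j g < c) →
      ∀ R > (0 : ℝ), ∃ g : G, Metric.ball g R ⊆ {x : G | j x < 0}) ∧
    (∀ S : Finset G, Subgroup.closure (S : Set G) = ⊤ →
      (∀ g h : G, dist g h = sInf {r : ℝ | ∃ l : List G,
          (∀ s ∈ l, s ∈ (S : Set G) ∪ (S : Set G)⁻¹) ∧ l.prod = g * h⁻¹ ∧ r = l.length}) →
      ∀ H : Set G, IsHoroball G H → ∀ R > (0 : ℝ), ∃ g : G, Metric.ball g R ⊆ H) := by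
  refine ⟨fun j hj hinf R _ =>
    exists_ball_subset_setOf_neg_of_mem_closure_range_busemann hj.1 hinf R, ?_⟩
  rintro S hS hd H ⟨j, hj, rfl⟩ R -
  exact exists_ball_subset_setOf_neg_of_mem_closure_range_busemann hj.1
    (IsHorofunction.exists_lt_of_isWordDist hj hd hS) R

/-- (1) Any horofunction `j` with `inf j = -∞` has a horoball containing arbitrarily large
balls; (2) consequently, for the word (`ℓ¹`) metric of a group generated by a finite set `S`,
every horoball contains arbitrarily large balls. -/
theorem horoball_contains_large_balls
    {G : Type*} [Group G] [MetricSpace G] [ProperSpace G] [Infinite G]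
    (hRI : ∀ g h f : G, dist (g * f) (h * f) = dist g h) :
    (∀ j : C(G, ℝ), IsHorofunction G j → (∀ c : ℝ, ∃ g : G, j g < c) →
      ∀ R > (0 : ℝ), ∃ g : G, Metric.ball g R ⊆ {x : G | j x < 0}) ∧
    (∀ S : Finset G, Subgroup.closure (S : Set G) = ⊤ →
      (∀ g h : G, dist g h = sInf {r : ℝ | ∃ l : List G,
          (∀ s ∈ l, s ∈ (S : Set G) ∪ (S : Set G)⁻¹) ∧ l.prod = g * h⁻¹ ∧ r = l.length}) →
      ∀ H : Set G, IsHoroball G H → ∀ R > (0 : ℝ), ∃ g : G, Metric.ball g R ⊆ H) :=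
  horoball_contains_large_balls_general
end

section
/- Let G be an infinite group with a proper right-invariant distance, let π : X → Y be a factor map between topological dynamical systems (X,T,G) and (Y,S,G), and assume π is not bounded to one. Let k ∈ G be an element generating an unbounded subgroup ⟨k⟩. Then for every ε > 0 there exists a sequence (g_n)_{n∈ℕ} in G leaving every ball such that: (1) the horoball H' = {x ∈ G : lim_{n→∞} b_{g_n^{-1}}(x) < 0} does not contain k; and (2) the horoball H = {x ∈ G : lim_{n→∞} b_{g_n}(x) < 0} admits an (ε,H)-asymptotic pair (x,y) relative to π, i.e. distinct points x, y ∈ X with π(x) = π(y) and dist(T_g x, T_g y) ≤ ε for all g ∈ H. -/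
open Metric Filter Topology

/-- A map is bounded to one if the cardinalities of its fibers are uniformly bounded. -/
def BoundedToOne {X Y : Type*} (π : X → Y) : Prop :=
  ∃ n : ℕ, ∀ (y : Y) (s : Finset X), (∀ x ∈ s, π x = y) → s.card ≤ n

namespace DirectedAux

open Set

section Busemann

variable {G : Type*} [Group G] [MetricSpace G] [ProperSpace G]

omit [ProperSpace G] in
lemma busemann_apply (g x : G) : busemann G g x = dist g x - dist g 1 := rfl

omit [ProperSpace G] in
lemma busemann_dist_le (g x y : G) :
    dist (busemann G g x) (busemann G g y) ≤ dist x y := by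
  rw [busemann_apply, busemann_apply, Real.dist_eq]
  have : dist g x - dist g 1 - (dist g y - dist g 1) = dist g x - dist g y := by ring
  rw [this, dist_comm g x, dist_comm g y]
  exact abs_dist_sub_le x y g

omit [ProperSpace G] in
lemma busemann_one (g : G) : busemann G g 1 = 0 := by
  simp [busemann_apply]

/-- The set of 1-Lipschitz continuous functions vanishing at `1` is compact in `C(G, ℝ)`. -/
lemma isCompact_lipset :
    IsCompact {f : C(G, ℝ) | (∀ x y, dist (f x) (f y) ≤ dist x y) ∧ f 1 = 0} := by
  set S : Set C(G, ℝ) := {f | (∀ x y, dist (f x) (f y) ≤ dist x y) ∧ f 1 = 0} with hS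
  apply ArzelaAscoli.isCompact_of_equicontinuous
  · have himg : ContinuousMap.toFun '' S
        = {f : G → ℝ | (∀ x y, dist (f x) (f y) ≤ dist x y) ∧ f 1 = 0} := by
      ext f
      constructor
      · rintro ⟨F, hF, rfl⟩; exact hF
      · rintro ⟨h1, h2⟩
        have hcont : Continuous f := by
          have : LipschitzWith 1 f := by
            apply LipschitzWith.of_dist_le_mul
            intro x y; rw [NNReal.coe_one, one_mul]; exact h1 x y
          exact this.continuous
        exact ⟨⟨f, hcont⟩, ⟨h1, h2⟩, rfl⟩
    rw [himg]
    have hclosed : IsClosed {f : G → ℝ | (∀ x y, dist (f x) (f y) ≤ dist x y) ∧ f 1 = 0} := by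
      apply IsClosed.inter
      · show IsClosed {f : G → ℝ | ∀ x y, dist (f x) (f y) ≤ dist x y}
        have : {f : G → ℝ | ∀ x y, dist (f x) (f y) ≤ dist x y} =
            ⋂ (x) (y), {f : G → ℝ | dist (f x) (f y) ≤ dist x y} := by ext f; simp
        rw [this]
        exact isClosed_iInter fun x => isClosed_iInter fun y =>
          isClosed_le ((continuous_apply x).dist (continuous_apply y)) continuous_const
      · exact isClosed_eq (continuous_apply 1) continuous_const
    have hsub : {f : G → ℝ | (∀ x y, dist (f x) (f y) ≤ dist x y) ∧ f 1 = 0}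
        ⊆ Set.pi univ fun x : G => Icc (-(dist x 1)) (dist x 1) := by
      rintro f ⟨h1, h2⟩ x _
      have := h1 x 1
      rw [h2, Real.dist_eq, sub_zero] at this
      exact abs_le.1 this
    exact (isCompact_univ_pi fun x => isCompact_Icc).of_isClosed_subset hclosed hsub
  · intro x
    rw [Metric.equicontinuousAt_iff]
    intro ε hε
    refine ⟨ε, hε, fun y hy i => ?_⟩
    exact lt_of_le_of_lt (by rw [dist_comm y x] at hy ⊢; exact i.2.1 x y) hy

/-- Any sequence in `G` has a subsequence whose Busemann functions converge in `C(G, ℝ)`. -/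
lemma exists_subseq_busemann_tendsto (v : ℕ → G) :
    ∃ φ : ℕ → ℕ, StrictMono φ ∧ ∃ j : C(G, ℝ),
      Tendsto (fun n => busemann G (v (φ n))) atTop (𝓝 j) := by
  have hmem : ∀ n, busemann G (v n) ∈
      {f : C(G, ℝ) | (∀ x y, dist (f x) (f y) ≤ dist x y) ∧ f 1 = 0} :=
    fun n => ⟨fun x y => busemann_dist_le _ x y, busemann_one _⟩
  obtain ⟨j, -, φ, hφ, hconv⟩ := (isCompact_lipset (G := G)).tendsto_subseq hmem
  exact ⟨φ, hφ, j, hconv⟩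

/-- Simultaneous convergent subsequence for Busemann functions of a sequence and its inverses. -/
lemma exists_subseq_busemann_pair (v : ℕ → G) :
    ∃ Φ : ℕ → ℕ, StrictMono Φ ∧ ∃ j j' : C(G, ℝ),
      Tendsto (fun n => busemann G (v (Φ n))) atTop (𝓝 j) ∧
      Tendsto (fun n => busemann G (v (Φ n))⁻¹) atTop (𝓝 j') := by
  obtain ⟨φ₁, hφ₁, j, hj⟩ := exists_subseq_busemann_tendsto v
  obtain ⟨φ₂, hφ₂, j', hj'⟩ := exists_subseq_busemann_tendsto (fun n => (v (φ₁ n))⁻¹)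
  exact ⟨φ₁ ∘ φ₂, hφ₁.comp hφ₂, j, j', hj.comp hφ₂.tendsto_atTop, hj'⟩

end Busemann

section Group

variable {G : Type*} [Group G] [MetricSpace G] [ProperSpace G]
variable (hRI : ∀ g h f : G, dist (g * f) (h * f) = dist g h)

include hRI

omit [ProperSpace G] in
lemma dist_inv_one' (x : G) : dist x⁻¹ 1 = dist x 1 := by
  have := hRI x⁻¹ 1 x
  rw [one_mul, inv_mul_cancel] at this
  rw [← this, dist_comm]

/-- Directional records of the norm along an unbounded cyclic subgroup. -/
lemma lemmaJ (k : G) (hk : ¬ Bornology.IsBounded ((Subgroup.zpowers k : Subgroup G) : Set G))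
    (M δ : ℝ) (hδ : 0 < δ) :
    ∃ p : ℤ, M ≤ dist (k ^ p) 1 ∧ dist (k ^ p) 1 - δ ≤ dist (k ^ (p + 1)) 1 := by
  set f : ℤ → ℝ := fun p => dist (k ^ p) 1 with hf
  have hsym : ∀ p, f (-p) = f p := by
    intro p
    show dist (k ^ (-p)) 1 = dist (k ^ p) 1
    rw [zpow_neg, dist_inv_one' hRI]
  have hunb : ∀ C : ℝ, ∃ p : ℤ, C < f p := by
    intro C
    by_contra h
    push_neg at h
    apply hk
    rw [Metric.isBounded_iff_subset_closedBall 1]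
    refine ⟨C, ?_⟩
    rintro x ⟨p, rfl⟩
    exact mem_closedBall.2 (h p)
  have hstep : ∀ p : ℤ, |f (p + 1) - f p| ≤ dist k 1 := by
    intro p
    have h1 : dist (k ^ (p + 1)) (k ^ p) = dist k 1 := by
      rw [add_comm, zpow_one_add]
      have := hRI k 1 (k ^ p)
      rw [one_mul] at this
      exact this
    calc |f (p+1) - f p| ≤ dist (k ^ (p+1)) (k ^ p) := abs_dist_sub_le _ _ _
      _ = dist k 1 := h1
  obtain ⟨p₀, hp₀⟩ := hunb (M + dist k 1)
  by_cases hgood : f p₀ - δ ≤ f (p₀ + 1)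
  · exact ⟨p₀, le_of_lt (lt_of_le_of_lt (le_add_of_nonneg_right dist_nonneg) hp₀), hgood⟩
  · push_neg at hgood
    refine ⟨-(p₀ + 1), ?_, ?_⟩
    · show M ≤ f (-(p₀ + 1))
      rw [hsym]
      have := (abs_le.1 (hstep p₀)).1
      linarith
    · show f (-(p₀ + 1)) - δ ≤ f (-(p₀ + 1) + 1)
      rw [(by ring : -(p₀ + 1) + 1 = -p₀), hsym, hsym]
      linarith

omit [ProperSpace G] in
lemma busemann_inv_pow (k : G) (q : ℤ) :
    busemann G (k ^ q)⁻¹ k = dist (k ^ (q + 1)) 1 - dist (k ^ q) 1 := by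
  rw [busemann_apply]
  have h1 : dist (k ^ q)⁻¹ k = dist (k ^ (q + 1)) 1 := by
    have := hRI (k ^ q)⁻¹ k (k ^ q)
    rw [inv_mul_cancel] at this
    rw [← this, dist_comm, add_comm, zpow_one_add]
  have h2 : dist (k ^ q)⁻¹ 1 = dist (k ^ q) 1 := dist_inv_one' hRI _
  rw [h1, h2]

end Group

section Dynamics

variable {G : Type*} [Group G] [MetricSpace G] [ProperSpace G]
variable {X : Type*} [MetricSpace X] [CompactSpace X]
variable {Y : Type*} [MetricSpace Y]
variable {T : G → X → X} {π : X → Y}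

/-- Uniform continuity of the action over a compact set of group elements. -/
lemma unif_cont (hT : Continuous fun p : G × X => T p.1 p.2)
    {K : Set G} (hK : IsCompact K) {δ : ℝ} (hδ : 0 < δ) :
    ∃ ρ > 0, ∀ g ∈ K, ∀ x x' : X, dist x x' < ρ → dist (T g x) (T g x') < δ := by
  by_contra hcon
  push_neg at hcon
  have key : ∀ n : ℕ, ∃ w : G × X × X, w.1 ∈ K ∧ dist w.2.1 w.2.2 < 1 / (n + 1) ∧
      δ ≤ dist (T w.1 w.2.1) (T w.1 w.2.2) := by
    intro n
    obtain ⟨g, hg, x, x', hxx, hsep⟩ := hcon (1 / (n + 1)) (by positivity)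
    exact ⟨⟨g, x, x'⟩, hg, hxx, hsep⟩
  choose w hw1 hw2 hw3 using key
  have hKc : IsCompact (K ×ˢ (univ ×ˢ univ : Set (X × X))) :=
    hK.prod (isCompact_univ.prod isCompact_univ)
  have hmem : ∀ n, w n ∈ K ×ˢ (univ ×ˢ univ : Set (X × X)) :=
    fun n => ⟨hw1 n, trivial, trivial⟩
  obtain ⟨l, hl, φ, hφ, hconv⟩ := hKc.tendsto_subseq hmem
  have hg : Tendsto (fun n => (w (φ n)).1) atTop (𝓝 l.1) :=
    (continuous_fst.tendsto l).comp hconv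
  have hx : Tendsto (fun n => (w (φ n)).2.1) atTop (𝓝 l.2.1) :=
    ((continuous_fst.comp continuous_snd).tendsto l).comp hconv
  have hx' : Tendsto (fun n => (w (φ n)).2.2) atTop (𝓝 l.2.2) :=
    ((continuous_snd.comp continuous_snd).tendsto l).comp hconv
  have hdist0 : Tendsto (fun n => dist (w (φ n)).2.1 (w (φ n)).2.2) atTop (𝓝 0) := by
    have hle : ∀ n, dist (w (φ n)).2.1 (w (φ n)).2.2 ≤ 1 / (n + 1) := by
      intro n
      have hmono : (1 : ℝ) / (φ n + 1) ≤ 1 / (n + 1) := by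
        apply one_div_le_one_div_of_le
        · positivity
        · have : (n:ℝ) ≤ (φ n : ℝ) := by exact_mod_cast hφ.le_apply
          linarith
      exact le_trans (hw2 (φ n)).le hmono
    have h0 : Tendsto (fun n : ℕ => 1 / ((n : ℝ) + 1)) atTop (𝓝 0) :=
      tendsto_one_div_add_atTop_nhds_zero_nat
    exact squeeze_zero (fun n => dist_nonneg) hle h0
  have heq : l.2.1 = l.2.2 := by
    have h1 := hx.dist hx'
    exact eq_of_dist_eq_zero (tendsto_nhds_unique h1 hdist0)
  have hTT : Tendsto (fun n => dist (T (w (φ n)).1 (w (φ n)).2.1) (T (w (φ n)).1 (w (φ n)).2.2))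
      atTop (𝓝 (dist (T l.1 l.2.1) (T l.1 l.2.2))) := by
    have h1 : Tendsto (fun n => T (w (φ n)).1 (w (φ n)).2.1) atTop (𝓝 (T l.1 l.2.1)) :=
      (hT.tendsto (l.1, l.2.1)).comp (hg.prodMk_nhds hx)
    have h2 : Tendsto (fun n => T (w (φ n)).1 (w (φ n)).2.2) atTop (𝓝 (T l.1 l.2.2)) :=
      (hT.tendsto (l.1, l.2.2)).comp (hg.prodMk_nhds hx')
    exact h1.dist h2
  have hfin : δ ≤ dist (T l.1 l.2.1) (T l.1 l.2.2) :=
    le_of_tendsto_of_tendsto' tendsto_const_nhds hTT (fun n => hw3 (φ n))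
  rw [heq] at hfin
  simp at hfin
  linarith

/-- Arbitrarily large finite families within one fiber of `π`, pairwise `δ`-close on `K`. -/
lemma exists_close_family (hT : Continuous fun p : G × X => T p.1 p.2)
    (hπnb : ¬ BoundedToOne π)
    {K : Set G} (hK : IsCompact K) {δ : ℝ} (hδ : 0 < δ) (N : ℕ) :
    ∃ (s : Finset X) (y : Y), N ≤ s.card ∧ (∀ x ∈ s, π x = y) ∧
      ∀ a ∈ s, ∀ b ∈ s, ∀ g ∈ K, dist (T g a) (T g b) < δ := by
  classical
  obtain ⟨ρ, hρ, hUC⟩ := unif_cont hT hK hδ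
  obtain ⟨t, -, htfin, hcover⟩ :=
    finite_cover_balls_of_compact (isCompact_univ : IsCompact (Set.univ : Set X))
      (by positivity : (0:ℝ) < ρ/2)
  have hc : ∀ x : X, ∃ y ∈ htfin.toFinset, x ∈ ball y (ρ/2) := by
    intro x
    have := hcover (mem_univ x)
    simp only [mem_iUnion, exists_prop] at this
    obtain ⟨y, hy, hxy⟩ := this
    exact ⟨y, htfin.mem_toFinset.2 hy, hxy⟩
  choose c hct hcball using hc
  rw [BoundedToOne] at hπnb
  push_neg at hπnb
  obtain ⟨y, s₀, hs₀y, hs₀card⟩ := hπnb (htfin.toFinset.card * N)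
  obtain ⟨b, -, hb⟩ := Finset.exists_lt_card_fiber_of_mul_lt_card_of_maps_to
    (f := c) (fun a _ => hct a) hs₀card
  set s₁ := s₀.filter (fun a => c a = b) with hs₁
  refine ⟨s₁, y, hb.le, fun x hx => hs₀y x (Finset.mem_of_mem_filter x hx), ?_⟩
  intro a ha a' ha' g hg
  apply hUC g hg
  have hca : c a = b := (Finset.mem_filter.1 ha).2
  have hca' : c a' = b := (Finset.mem_filter.1 ha').2
  have h1 : dist a (c a) < ρ/2 := mem_ball.1 (hcball a)
  have h2 : dist a' (c a') < ρ/2 := mem_ball.1 (hcball a')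
  rw [hca] at h1; rw [hca'] at h2
  calc dist a a' ≤ dist a b + dist a' b := dist_triangle_right a a' b
    _ < ρ/2 + ρ/2 := add_lt_add h1 h2
    _ = ρ := by ring

/-- Finite bound on families pairwise `δ`-separated somewhere in a compact set `K`. -/
lemma sep_bound (hT : Continuous fun p : G × X => T p.1 p.2)
    {K : Set G} (hK : IsCompact K) {δ : ℝ} (hδ : 0 < δ) :
    ∃ N : ℕ, ∀ s : Finset X,
      (∀ a ∈ s, ∀ b ∈ s, a ≠ b → ∃ g ∈ K, δ ≤ dist (T g a) (T g b)) → s.card ≤ N := by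
  classical
  obtain ⟨ρ, hρ, hUC⟩ := unif_cont hT hK hδ
  obtain ⟨t, -, htfin, hcover⟩ :=
    finite_cover_balls_of_compact (isCompact_univ : IsCompact (Set.univ : Set X))
      (by positivity : (0:ℝ) < ρ/2)
  have hc : ∀ x : X, ∃ y ∈ htfin.toFinset, x ∈ ball y (ρ/2) := by
    intro x
    have := hcover (mem_univ x)
    simp only [mem_iUnion, exists_prop] at this
    obtain ⟨y, hy, hxy⟩ := this
    exact ⟨y, htfin.mem_toFinset.2 hy, hxy⟩
  choose c hct hcball using hc
  refine ⟨htfin.toFinset.card, fun s hsep => ?_⟩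
  by_contra hlt
  push_neg at hlt
  obtain ⟨a, ha, a', ha', hne, hcc⟩ :=
    Finset.exists_ne_map_eq_of_card_lt_of_maps_to hlt (fun a _ => hct a)
  obtain ⟨g, hg, hsepg⟩ := hsep a ha a' ha' hne
  have h1 : dist a (c a) < ρ/2 := mem_ball.1 (hcball a)
  have h2 : dist a' (c a') < ρ/2 := mem_ball.1 (hcball a')
  rw [hcc] at h1
  have hlt' : dist a a' < ρ := by
    calc dist a a' ≤ dist a (c a') + dist a' (c a') := dist_triangle_right a a' (c a')
      _ < ρ/2 + ρ/2 := add_lt_add h1 h2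
      _ = ρ := by ring
  exact absurd (hUC g hg a a' hlt') (not_lt.2 hsepg)

/-- The key construction: a pair in a fiber separated at `s`, with `s` nearly a
`k`-directional record point of the separation set. -/
lemma good_step
    (hRI : ∀ g h f : G, dist (g * f) (h * f) = dist g h)
    (hT : Continuous fun p : G × X => T p.1 p.2)
    (hTmul : ∀ (g h : G) (x : X), T g (T h x) = T (g * h) x)
    (hTone : ∀ x : X, T 1 x = x)
    (hπnb : ¬ BoundedToOne π)
    (k : G) {ε : ℝ} (hε : 0 < ε)
    (hsep : ∀ a b : X, a ≠ b → π a = π b → ∃ g : G, ε < dist (T g a) (T g b))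
    (n : ℕ) :
    ∃ (a b : X) (s : G) (m : ℕ), π a = π b ∧
      ε ≤ dist (T s a) (T s b) ∧
      (n : ℝ) ≤ dist s (k ^ (m : ℤ)) ∧
      dist s (k ^ (m : ℤ)) - 1 / (n + 1) ≤ dist s (k ^ ((m : ℤ) + 1)) ∧
      (∀ g : G, dist (g * s) (k ^ (m : ℤ)) < dist s (k ^ (m : ℤ)) →
        dist (T g (T s a)) (T g (T s b)) ≤ ε) := by
  classical
  set κ := dist k 1 with hκ
  have hκ0 : 0 ≤ κ := dist_nonneg
  set M : ℝ := (n : ℝ) with hM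
  have hM0 : 0 ≤ M := Nat.cast_nonneg n
  set δ' : ℝ := 1 / (n + 1) with hδ'
  have hδ'0 : 0 < δ' := by positivity
  set r : ℝ := M + κ + 1 with hr
  obtain ⟨N, hN⟩ := sep_bound hT (isCompact_closedBall (1 : G) (M + κ)) hε
  obtain ⟨fam, y, hfamcard, hfamy, hfamclose⟩ :=
    exists_close_family hT hπnb (isCompact_closedBall (1 : G) r) hε (N + 2)
  set E : X → X → Set G := fun a b => closure {g : G | ε < dist (T g a) (T g b)} with hE
  have hEclosed : ∀ a b, IsClosed (E a b) := fun a b => isClosed_closure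
  have hTw : ∀ a : X, Continuous fun w : G => T w a := fun a =>
    hT.comp (continuous_id.prodMk continuous_const)
  have hEle : ∀ a b : X, E a b ⊆ {w : G | ε ≤ dist (T w a) (T w b)} := by
    intro a b
    exact closure_minimal (fun w (hw : ε < dist (T w a) (T w b)) => le_of_lt hw)
      (isClosed_le continuous_const ((hTw a).dist (hTw b)))
  have hEne : ∀ a ∈ fam, ∀ b ∈ fam, a ≠ b → (E a b).Nonempty := by
    intro a ha b hb hab
    obtain ⟨g, hg⟩ := hsep a b hab (by rw [hfamy a ha, hfamy b hb])
    exact ⟨g, subset_closure hg⟩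
  set ν : X → X → ℕ → ℝ := fun a b m => infDist (k ^ (m : ℤ)) (E a b) with hν
  have hνstep : ∀ a b m, |ν a b (m + 1) - ν a b m| ≤ κ := by
    intro a b m
    have h1 : dist (k ^ ((m + 1 : ℕ) : ℤ)) (k ^ (m : ℤ)) = κ := by
      push_cast
      rw [add_comm, zpow_one_add]
      have := hRI k 1 (k ^ (m : ℤ))
      rw [one_mul] at this
      exact this
    have h2 := (lipschitz_infDist_pt (E a b)).dist_le_mul (k ^ ((m + 1 : ℕ) : ℤ)) (k ^ (m : ℤ))
    rw [NNReal.coe_one, one_mul, h1, Real.dist_eq] at h2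
    exact h2
  have main : ∃ a ∈ fam, ∃ b ∈ fam, a ≠ b ∧
      ∃ m : ℕ, M ≤ ν a b m ∧ ν a b m - δ' ≤ ν a b (m + 1) := by
    by_contra hbad
    push_neg at hbad
    have htail : ∀ a ∈ fam, ∀ b ∈ fam, a ≠ b → ∀ᶠ m in atTop, ν a b m < M + κ := by
      intro a ha b hb hab
      have hbadr : ∀ m, M ≤ ν a b m → ν a b (m + 1) < ν a b m - δ' :=
        fun m hm => hbad a ha b hb hab m hm
      have hm₀ : ∃ m₀, ν a b m₀ < M := by
        by_contra hc
        push_neg at hc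
        have hdesc : ∀ m : ℕ, ν a b m ≤ ν a b 0 - m * δ' := by
          intro m
          induction m with
          | zero => simp
          | succ p ih =>
            have := hbadr p (hc p)
            push_cast
            linarith
        obtain ⟨m, hm⟩ := exists_nat_gt (ν a b 0 / δ')
        have h1 := hdesc m
        have h2 : ν a b 0 < m * δ' := by
          rw [div_lt_iff₀ hδ'0] at hm
          linarith
        have h3 : 0 ≤ ν a b m := infDist_nonneg
        linarith
      obtain ⟨m₀, hm₀⟩ := hm₀
      rw [eventually_atTop]
      refine ⟨m₀, ?_⟩
      intro m hm
      induction m, hm using Nat.le_induction with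
      | base => linarith
      | succ p hp ih =>
        by_cases hcase : M ≤ ν a b p
        · have := hbadr p hcase
          linarith
        · push_neg at hcase
          have := (abs_le.1 (hνstep a b p)).2
          linarith
    have hall : ∀ᶠ m in atTop, ∀ q ∈ fam ×ˢ fam, q.1 ≠ q.2 → ν q.1 q.2 m < M + κ := by
      rw [Filter.eventually_all_finset]
      rintro ⟨a, b⟩ hq
      rw [Finset.mem_product] at hq
      by_cases hab : a ≠ b
      · exact (htail a hq.1 b hq.2 hab).mono fun m hm _ => hm
      · exact Eventually.of_forall fun m h => absurd h hab
    obtain ⟨mstar, hmstar⟩ := hall.exists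
    have hinj : Function.Injective (T (k ^ (mstar : ℤ))) := by
      intro x x' hxx
      have := congrArg (T (k ^ (mstar : ℤ))⁻¹) hxx
      rwa [hTmul, hTmul, inv_mul_cancel, hTone, hTone] at this
    set fam' := fam.image (T (k ^ (mstar : ℤ))) with hfam'
    have hcard' : fam'.card = fam.card := Finset.card_image_of_injective fam hinj
    have hsep' : ∀ p ∈ fam', ∀ q ∈ fam', p ≠ q →
        ∃ g ∈ closedBall (1 : G) (M + κ), ε ≤ dist (T g p) (T g q) := by
      intro p hp q hq hpq
      obtain ⟨a, ha, rfl⟩ := Finset.mem_image.1 hp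
      obtain ⟨b, hb, rfl⟩ := Finset.mem_image.1 hq
      have hab : a ≠ b := fun h => hpq (by rw [h])
      have hν' : ν a b mstar < M + κ := hmstar (a, b) (Finset.mem_product.2 ⟨ha, hb⟩) hab
      rw [hν, infDist_lt_iff (hEne a ha b hb hab)] at hν'
      obtain ⟨w, hwE, hwd⟩ := hν'
      refine ⟨w * (k ^ (mstar : ℤ))⁻¹, ?_, ?_⟩
      · rw [mem_closedBall]
        have h1 : dist (w * (k ^ (mstar : ℤ))⁻¹) 1 = dist w (k ^ (mstar : ℤ)) := by
          have := hRI (w * (k ^ (mstar : ℤ))⁻¹) 1 (k ^ (mstar : ℤ))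
          rw [one_mul, inv_mul_cancel_right] at this
          exact this.symm
        rw [h1, dist_comm]
        exact le_of_lt hwd
      · rw [hTmul, hTmul, inv_mul_cancel_right]
        exact hEle a b hwE
    have hcontr := hN fam' hsep'
    rw [hcard'] at hcontr
    omega
  obtain ⟨a, ha, b, hb, hab, m, hm1, hm2⟩ := main
  obtain ⟨s, hsE, hsd⟩ :=
    (hEclosed a b).exists_infDist_eq_dist (hEne a ha b hb hab) (k ^ (m : ℤ))
  have hνm : ν a b m = dist (k ^ (m : ℤ)) s := hsd
  refine ⟨a, b, s, m, by rw [hfamy a ha, hfamy b hb], hEle a b hsE, ?_, ?_, ?_⟩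
  · rw [dist_comm]
    rw [hνm] at hm1
    exact hm1
  · have hle : ν a b (m + 1) ≤ dist (k ^ ((m + 1 : ℕ) : ℤ)) s := infDist_le_dist_of_mem hsE
    have heq : dist (k ^ ((m + 1 : ℕ) : ℤ)) s = dist s (k ^ ((m : ℤ) + 1)) := by
      rw [dist_comm]; push_cast; ring_nf
    rw [dist_comm s (k ^ (m : ℤ)), ← hνm]
    linarith
  · intro g hg
    by_contra hcon
    push_neg at hcon
    rw [hTmul, hTmul] at hcon
    have hgsD : g * s ∈ E a b := subset_closure hcon
    have hle2 : ν a b m ≤ dist (k ^ (m : ℤ)) (g * s) := infDist_le_dist_of_mem hgsD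
    rw [hνm, dist_comm (k ^ (m : ℤ)) (g * s), dist_comm (k ^ (m : ℤ)) s] at hle2
    linarith

end Dynamics

end DirectedAux

/-- General form of the directed asymptotic pair theorem: there is an unbounded sequence
`(g_n)` such that the horoball `H' = {lim b_{g_n⁻¹} < 0}` does not contain `k`, while the
horoball `H = {lim b_{g_n} < 0}` admits an `(ε,H)`-asymptotic pair relative to `π`. -/
theorem directed_factor_asymptotic_pair_general
    {G : Type*} [Group G] [MetricSpace G] [ProperSpace G] [Infinite G]
    (hRI : ∀ g h f : G, dist (g * f) (h * f) = dist g h)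
    {X : Type*} [MetricSpace X] [CompactSpace X]
    {Y : Type*} [MetricSpace Y] [CompactSpace Y]
    (T : G → X → X)
    (hT : Continuous fun p : G × X => T p.1 p.2)
    (hTmul : ∀ (g h : G) (x : X), T g (T h x) = T (g * h) x)
    (hTone : ∀ x : X, T 1 x = x)
    (S : G → Y → Y)
    (hS : Continuous fun p : G × Y => S p.1 p.2)
    (hSmul : ∀ (g h : G) (y : Y), S g (S h y) = S (g * h) y)
    (hSone : ∀ y : Y, S 1 y = y)
    (π : X → Y) (hπc : Continuous π) (hπs : Function.Surjective π)
    (hπeq : ∀ (g : G) (x : X), π (T g x) = S g (π x))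
    (hπnb : ¬ BoundedToOne π)
    (k : G) (hk : ¬ Bornology.IsBounded ((Subgroup.zpowers k : Subgroup G) : Set G)) :
    ∀ ε > (0 : ℝ), ∃ u : ℕ → G,
      Filter.Tendsto (fun n => dist (u n) (1 : G)) Filter.atTop Filter.atTop ∧
      ∃ j j' : C(G, ℝ),
        Filter.Tendsto (fun n => busemann G (u n)) Filter.atTop (nhds j) ∧
        Filter.Tendsto (fun n => busemann G (u n)⁻¹) Filter.atTop (nhds j') ∧
        ¬ (j' k < 0) ∧
        ∃ x y : X, x ≠ y ∧ π x = π y ∧ ∀ g : G, j g < 0 → dist (T g x) (T g y) ≤ ε := by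
  classical
  intro ε hε
  by_cases hglob : ∃ a b : X, a ≠ b ∧ π a = π b ∧ ∀ g : G, dist (T g a) (T g b) ≤ ε
  · -- a globally `ε`-close pair exists: use a record sequence inside `⟨k⟩`
    obtain ⟨a, b, hab, hπab, hclose⟩ := hglob
    have hp : ∀ n : ℕ, ∃ p : ℤ, (n : ℝ) ≤ dist (k ^ p) 1 ∧
        dist (k ^ p) 1 - 1 / (n + 1) ≤ dist (k ^ (p + 1)) 1 :=
      fun n => DirectedAux.lemmaJ hRI k hk n (1 / (n + 1)) (by positivity)
    choose p hp1 hp2 using hp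
    set u₀ : ℕ → G := fun n => k ^ (p n) with hu₀
    obtain ⟨Φ, hΦ, j, j', hj, hj'⟩ := DirectedAux.exists_subseq_busemann_pair u₀
    refine ⟨u₀ ∘ Φ, ?_, j, j', hj, hj', ?_, a, b, hab, hπab, fun g _ => hclose g⟩
    · apply tendsto_atTop_mono ?_ (tendsto_natCast_atTop_atTop (R := ℝ))
      intro n
      calc (n : ℝ) ≤ (Φ n : ℝ) := by exact_mod_cast hΦ.le_apply
        _ ≤ dist (u₀ (Φ n)) 1 := hp1 (Φ n)
    · rw [not_lt]
      have heval : Tendsto (fun n => busemann G (u₀ (Φ n))⁻¹ k) atTop (𝓝 (j' k)) :=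
        ((continuous_eval_const k).tendsto j').comp hj'
      have hc0 : Tendsto (fun n : ℕ => -(1 / ((n : ℝ) + 1))) atTop (𝓝 0) := by
        rw [(by norm_num : (0:ℝ) = -0)]
        exact tendsto_one_div_add_atTop_nhds_zero_nat.neg
      refine le_of_tendsto_of_tendsto' hc0 heval ?_
      intro n
      rw [DirectedAux.busemann_inv_pow hRI k (p (Φ n))]
      have hmono : (1 : ℝ) / (Φ n + 1) ≤ 1 / (n + 1) := by
        apply one_div_le_one_div_of_le
        · positivity
        · have : (n:ℝ) ≤ (Φ n : ℝ) := by exact_mod_cast hΦ.le_apply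
          linarith
      have := hp2 (Φ n)
      linarith
  · -- no globally close pair: run the main construction
    push_neg at hglob
    have hsep : ∀ a b : X, a ≠ b → π a = π b → ∃ g : G, ε < dist (T g a) (T g b) :=
      fun a b h1 h2 => hglob a b h1 h2
    have hstep := fun n : ℕ =>
      DirectedAux.good_step (T := T) (π := π) hRI hT hTmul hTone hπnb k hε hsep n
    choose a b s m hπab hsepab hlow hrec hmin using hstep
    -- the candidate sequence
    set u₀ : ℕ → G := fun n => k ^ ((m n : ℕ) : ℤ) * (s n)⁻¹ with hu₀
    have hu₀dist : ∀ n, dist (u₀ n) 1 = dist (s n) (k ^ ((m n : ℕ) : ℤ)) := by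
      intro n
      have := hRI (k ^ ((m n : ℕ) : ℤ) * (s n)⁻¹) 1 (s n)
      rw [one_mul, inv_mul_cancel_right] at this
      rw [← this, dist_comm]
    -- extract convergent subsequences for the shifted points
    have hpmem : ∀ n, T (s n) (a n) ∈ (Set.univ : Set X) := fun n => trivial
    obtain ⟨x₀, -, φa, hφa, hpa⟩ := isCompact_univ.tendsto_subseq hpmem
    have hqmem : ∀ n, T (s (φa n)) (b (φa n)) ∈ (Set.univ : Set X) := fun n => trivial
    obtain ⟨y₀, -, φb, hφb, hqb⟩ := isCompact_univ.tendsto_subseq hqmem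
    obtain ⟨φc, hφc, j, j', hj, hj'⟩ :=
      DirectedAux.exists_subseq_busemann_pair (fun n => u₀ (φa (φb n)))
    set Φ : ℕ → ℕ := φa ∘ φb ∘ φc with hΦdef
    have hΦ : StrictMono Φ := (hφa.comp hφb).comp hφc
    have hpx : Tendsto (fun n => T (s (Φ n)) (a (Φ n))) atTop (𝓝 x₀) :=
      hpa.comp (hφb.comp hφc).tendsto_atTop
    have hqy : Tendsto (fun n => T (s (Φ n)) (b (Φ n))) atTop (𝓝 y₀) :=
      hqb.comp hφc.tendsto_atTop
    refine ⟨u₀ ∘ Φ, ?_, j, j', hj, hj', ?_, x₀, y₀, ?_, ?_, ?_⟩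
    · -- distances tend to infinity
      apply tendsto_atTop_mono ?_ (tendsto_natCast_atTop_atTop (R := ℝ))
      intro n
      calc (n : ℝ) ≤ (Φ n : ℝ) := by exact_mod_cast hΦ.le_apply
        _ ≤ dist (s (Φ n)) (k ^ ((m (Φ n) : ℕ) : ℤ)) := hlow (Φ n)
        _ = dist (u₀ (Φ n)) 1 := (hu₀dist (Φ n)).symm
    · -- j' k ≥ 0
      rw [not_lt]
      have heval : Tendsto (fun n => busemann G (u₀ (Φ n))⁻¹ k) atTop (𝓝 (j' k)) :=
        ((continuous_eval_const k).tendsto j').comp hj'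
      have hc0 : Tendsto (fun n : ℕ => -(1 / ((n : ℝ) + 1))) atTop (𝓝 0) := by
        rw [(by norm_num : (0:ℝ) = -0)]
        exact tendsto_one_div_add_atTop_nhds_zero_nat.neg
      refine le_of_tendsto_of_tendsto' hc0 heval ?_
      intro n
      set q := Φ n with hq
      have hiq : (u₀ q)⁻¹ = s q * (k ^ ((m q : ℕ) : ℤ))⁻¹ := by
        rw [hu₀]
        rw [mul_inv_rev, inv_inv]
      have h1 : dist (s q * (k ^ ((m q : ℕ) : ℤ))⁻¹) k
          = dist (s q) (k ^ (((m q : ℕ) : ℤ) + 1)) := by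
        have := hRI (s q * (k ^ ((m q : ℕ) : ℤ))⁻¹) k (k ^ ((m q : ℕ) : ℤ))
        rw [inv_mul_cancel_right] at this
        rw [← this, add_comm, zpow_one_add]
      have h2 : dist (s q * (k ^ ((m q : ℕ) : ℤ))⁻¹) 1 = dist (s q) (k ^ ((m q : ℕ) : ℤ)) := by
        have := hRI (s q * (k ^ ((m q : ℕ) : ℤ))⁻¹) 1 (k ^ ((m q : ℕ) : ℤ))
        rw [one_mul, inv_mul_cancel_right] at this
        exact this.symm
      have hval : busemann G (u₀ q)⁻¹ k =
          dist (s q) (k ^ (((m q : ℕ) : ℤ) + 1)) - dist (s q) (k ^ ((m q : ℕ) : ℤ)) := by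
        rw [hiq, DirectedAux.busemann_apply, h1, h2]
      rw [hval]
      have hmono : (1 : ℝ) / (q + 1) ≤ 1 / (n + 1) := by
        apply one_div_le_one_div_of_le
        · positivity
        · have hnq : (n:ℝ) ≤ (q : ℝ) := by
            have : n ≤ Φ n := hΦ.le_apply
            exact_mod_cast this
          linarith
      have := hrec q
      linarith
    · -- x₀ ≠ y₀
      have hdge : ε ≤ dist x₀ y₀ := by
        refine le_of_tendsto_of_tendsto' tendsto_const_nhds (hpx.dist hqy) ?_
        intro n
        exact hsepab (Φ n)
      intro hxy
      rw [hxy, dist_self] at hdge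
      linarith
    · -- same fiber
      have h1 : Tendsto (fun n => π (T (s (Φ n)) (a (Φ n)))) atTop (𝓝 (π x₀)) :=
        (hπc.tendsto x₀).comp hpx
      have h2 : Tendsto (fun n => π (T (s (Φ n)) (b (Φ n)))) atTop (𝓝 (π y₀)) :=
        (hπc.tendsto y₀).comp hqy
      have heqn : ∀ n, π (T (s (Φ n)) (a (Φ n))) = π (T (s (Φ n)) (b (Φ n))) := by
        intro n
        rw [hπeq, hπeq, hπab (Φ n)]
      exact tendsto_nhds_unique h1 (h2.congr fun n => (heqn n).symm)
    · -- asymptotic on the horoball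
      intro g hg
      have hTg : Continuous (T g) := hT.comp (continuous_const.prodMk continuous_id)
      have heval : Tendsto (fun n => busemann G (u₀ (Φ n)) g) atTop (𝓝 (j g)) :=
        ((continuous_eval_const g).tendsto j).comp hj
      have hev : ∀ᶠ n in atTop, busemann G (u₀ (Φ n)) g < 0 :=
        heval.eventually (eventually_lt_nhds hg)
      have hle : ∀ᶠ n in atTop,
          dist (T g (T (s (Φ n)) (a (Φ n)))) (T g (T (s (Φ n)) (b (Φ n)))) ≤ ε := by
        refine hev.mono ?_
        intro n hn
        apply hmin (Φ n)
        have h1 : dist (u₀ (Φ n)) g = dist (g * s (Φ n)) (k ^ ((m (Φ n) : ℕ) : ℤ)) := by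
          have := hRI (k ^ ((m (Φ n) : ℕ) : ℤ) * (s (Φ n))⁻¹) g (s (Φ n))
          rw [inv_mul_cancel_right] at this
          rw [hu₀]
          rw [← this, dist_comm]
        have hval : busemann G (u₀ (Φ n)) g =
            dist (g * s (Φ n)) (k ^ ((m (Φ n) : ℕ) : ℤ)) -
              dist (s (Φ n)) (k ^ ((m (Φ n) : ℕ) : ℤ)) := by
          rw [DirectedAux.busemann_apply, h1, hu₀dist (Φ n)]
        rw [hval] at hn
        linarith
      have hlim : Tendsto (fun n =>
          dist (T g (T (s (Φ n)) (a (Φ n)))) (T g (T (s (Φ n)) (b (Φ n)))))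
          atTop (𝓝 (dist (T g x₀) (T g y₀))) :=
        ((hTg.tendsto x₀).comp hpx).dist ((hTg.tendsto y₀).comp hqy)
      exact le_of_tendsto hlim hle
end

section
/- Let (X,T,ℤ^d) be a topological dynamical system and π : X → Y a factor map onto a topological dynamical system (Y,S,ℤ^d). Then for every ε > 0 the set ND_{ℓ²}(X,ε,π) is a closed subset of the unit sphere 𝕊^{d−1} ⊆ ℝ^d, and consequently ND_{ℓ²}(X,π) = ⋂_{ε>0} ND_{ℓ²}(X,ε,π) is also closed. -/
open Metric Filter Topology

/-!
If the half-space `H_v` is `(ε,π)`-expansive, compactness of the fibre pairs yields a finite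
`K ⊆ H_v` such that `ε`-closeness of two points of a fibre along `K` already forces
`ε`-closeness at the origin. The finitely many conditions `⟨k, w⟩ < 0`, `k ∈ K`, persist for `w`
near `v`, and then `ε`-closeness along `H_w` propagates, one step `k ∈ K` at a time, to all of
`ℤ^d`, in particular to `H_v`, so `H_w` is expansive too. Thus expansive directions form an open
set and `ND_{ℓ²}(X,ε,π)` is closed.
-/

/-- The open half-space (`ℓ²` horoball) of `ℤ^d` with outward normal vector `v`. -/
def halfSpaceZ {d : ℕ} (v : EuclideanSpace ℝ (Fin d)) : Set (Fin d → ℤ) :=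
  {g | ∑ i, (g i : ℝ) * v i < 0}

/-- The set `ND_{ℓ²}(X,ε,π)` of unit vectors `v` whose half-space `H_v` is
`(ε,π)`-nonexpansive. -/
def NDl2 {d : ℕ} {X Y : Type*} [MetricSpace X] (T : (Fin d → ℤ) → X → X) (π : X → Y)
    (ε : ℝ) : Set (EuclideanSpace ℝ (Fin d)) :=
  {v | ‖v‖ = 1 ∧ ∃ x y : X, x ≠ y ∧ π x = π y ∧
    ∀ g ∈ halfSpaceZ v, dist (T g x) (T g y) ≤ ε}

/-- The negation of `(ε,π)`-nonexpansiveness of `H`. -/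
def IsFiberwiseExpansive {ι X Y : Type*} [MetricSpace X] (T : ι → X → X) (π : X → Y) (ε : ℝ)
    (H : Set ι) : Prop :=
  ∀ x y, π x = π y → (∀ g ∈ H, dist (T g x) (T g y) ≤ ε) → x = y

theorem IsFiberwiseExpansive.exists_finite_dist_le {ι X Y : Type*} [MetricSpace X]
    [CompactSpace X] [TopologicalSpace Y] [T2Space Y] {T : ι → X → X}
    (hT : ∀ g, Continuous (T g)) {π : X → Y} (hπ : Continuous π) {ε : ℝ} (hε : 0 < ε)
    {H : Set ι} (hexp : IsFiberwiseExpansive T π ε H) :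
    ∃ K ⊆ H, K.Finite ∧ ∀ x y, π x = π y →
      (∀ k ∈ K, dist (T k x) (T k y) ≤ ε) → dist x y ≤ ε := by
  set A : Set (X × X) := {p | π p.1 = π p.2 ∧ ε ≤ dist p.1 p.2}
  have hA : IsCompact A :=
    ((isClosed_eq (hπ.comp continuous_fst) (hπ.comp continuous_snd)).inter
      (isClosed_le continuous_const continuous_dist)).isCompact
  have hcover : A ⊆ ⋃ g ∈ H, {p | ε < dist (T g p.1) (T g p.2)} := by
    rintro ⟨x, y⟩ ⟨hxy, hfar⟩
    by_contra hnot
    simp only [Set.mem_iUnion, Set.mem_ofPred_eq, not_exists, not_lt] at hnot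
    rw [hexp x y hxy hnot, dist_self] at hfar
    linarith
  have hopen : ∀ g ∈ H, IsOpen {p : X × X | ε < dist (T g p.1) (T g p.2)} := fun g _ =>
    isOpen_lt continuous_const (((hT g).comp continuous_fst).dist ((hT g).comp continuous_snd))
  obtain ⟨K, hKH, hKfin, hK⟩ := hA.elim_finite_subcover_image hopen hcover
  refine ⟨K, hKH, hKfin, fun x y hxy hclose => ?_⟩
  by_contra! hfar
  obtain ⟨k, hk, hkfar⟩ := Set.mem_iUnion₂.1 (hK (show (x, y) ∈ A from ⟨hxy, hfar.le⟩))
  exact (hclose k hk).not_gt hkfar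

/-- Each step `h ↦ k + h` lowers `ℓ` by at least some uniform `δ > 0`, so induction on
`⌈ℓ g / δ⌉` reaches `{ℓ < 0}`. -/
theorem forall_of_forall_neg_of_forall_add {G : Type*} [AddZeroClass G] (ℓ : G →+ ℝ)
    {K : Set G} (hKfin : K.Finite) (hK : ∀ k ∈ K, ℓ k < 0) {P : G → Prop}
    (hneg : ∀ g, ℓ g < 0 → P g) (hstep : ∀ h, (∀ k ∈ K, P (k + h)) → P h) (g : G) : P g := by
  obtain ⟨δ, hKδ, hδ⟩ : ∃ δ, (∀ k ∈ K, ℓ k ≤ -δ) ∧ 0 < δ := by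
    have hsmall : ∀ᶠ δ in 𝓝[>] (0 : ℝ), ∀ k ∈ K, ℓ k ≤ -δ :=
      hKfin.eventually_all.2 fun k hk => nhdsWithin_le_nhds <|
        (eventually_lt_nhds (neg_pos.2 (hK k hk))).mono fun δ hδ => by linarith
    exact (hsmall.and self_mem_nhdsWithin).exists
  have hbelow : ∀ n : ℕ, ∀ h, ℓ h < n * δ → P h := by
    intro n
    induction n with
    | zero => exact fun h hh => hneg h (by simpa using hh)
    | succ n ih =>
      refine fun h hh => hstep h fun k hk => ih _ ?_
      rw [map_add]
      push_cast at hh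
      linarith [hKδ k hk]
  obtain ⟨n, hn⟩ := exists_nat_gt (ℓ g / δ)
  exact hbelow n g (by rwa [div_lt_iff₀ hδ] at hn)

section Lattice

variable {d : ℕ}

def latticePairing (v : EuclideanSpace ℝ (Fin d)) : (Fin d → ℤ) →+ ℝ where
  toFun g := ∑ i, (g i : ℝ) * v i
  map_zero' := by simp
  map_add' g h := by simp [add_mul, Finset.sum_add_distrib]

theorem mem_halfSpaceZ_iff {v : EuclideanSpace ℝ (Fin d)} {g : Fin d → ℤ} :
    g ∈ halfSpaceZ v ↔ latticePairing v g < 0 := Iff.rfl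

theorem continuous_latticePairing_apply (g : Fin d → ℤ) :
    Continuous fun v : EuclideanSpace ℝ (Fin d) => latticePairing v g := by
  simp only [latticePairing, AddMonoidHom.coe_mk, ZeroHom.coe_mk]
  fun_prop

variable {X Y : Type*} [MetricSpace X] {T : (Fin d → ℤ) → X → X} {π : X → Y} {ε : ℝ}

theorem NDl2_eq_sphere_inter :
    NDl2 T π ε = sphere 0 1 ∩ {v | IsFiberwiseExpansive T π ε (halfSpaceZ v)}ᶜ := by
  ext v
  simp only [NDl2, IsFiberwiseExpansive, mem_sphere_zero_iff_norm, Set.mem_inter_iff,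
    Set.mem_compl_iff, Set.mem_ofPred_eq, not_forall, exists_prop]
  aesop

variable [CompactSpace X] [TopologicalSpace Y] [T2Space Y]

theorem eventually_isFiberwiseExpansive_halfSpaceZ (hT : ∀ g, Continuous (T g))
    (hTadd : ∀ g h x, T g (T h x) = T (g + h) x) (hπ : Continuous π)
    (hπT : ∀ g x y, π x = π y → π (T g x) = π (T g y)) (hε : 0 < ε)
    {v : EuclideanSpace ℝ (Fin d)} (hexp : IsFiberwiseExpansive T π ε (halfSpaceZ v)) :
    ∀ᶠ w in 𝓝 v, IsFiberwiseExpansive T π ε (halfSpaceZ w) := by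
  obtain ⟨K, hKH, hKfin, hK⟩ := hexp.exists_finite_dist_le hT hπ hε
  have hnear : ∀ᶠ w in 𝓝 v, ∀ k ∈ K, latticePairing w k < 0 :=
    hKfin.eventually_all.2 fun k hk =>
      (continuous_latticePairing_apply k).continuousAt.eventually_lt continuousAt_const
        (mem_halfSpaceZ_iff.1 (hKH hk))
  filter_upwards [hnear] with w hw x y hxy hclose
  refine hexp x y hxy fun g _ => ?_
  refine forall_of_forall_neg_of_forall_add (latticePairing w) hKfin hw
    (fun k hk => hclose k (mem_halfSpaceZ_iff.2 hk)) (fun h hh => hK _ _ (hπT h x y hxy) ?_) g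
  simpa only [hTadd] using hh

theorem isClosed_NDl2 (hT : ∀ g, Continuous (T g))
    (hTadd : ∀ g h x, T g (T h x) = T (g + h) x) (hπ : Continuous π)
    (hπT : ∀ g x y, π x = π y → π (T g x) = π (T g y)) (hε : 0 < ε) :
    IsClosed (NDl2 T π ε) := by
  rw [NDl2_eq_sphere_inter]
  refine isClosed_sphere.inter (IsOpen.isClosed_compl ?_)
  exact isOpen_iff_eventually.2 fun v hv =>
    eventually_isFiberwiseExpansive_halfSpaceZ hT hTadd hπ hπT hε hv

end Lattice

theorem NDl2_isClosed_general
    {d : ℕ} {X Y : Type*} [MetricSpace X] [CompactSpace X] [MetricSpace Y]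
    (T : (Fin d → ℤ) → X → X)
    (hTc : ∀ g, Continuous (T g))
    (hTadd : ∀ (g h : Fin d → ℤ) (x : X), T g (T h x) = T (g + h) x)
    (S : (Fin d → ℤ) → Y → Y)
    (π : X → Y) (hπc : Continuous π)
    (hπeq : ∀ (g : Fin d → ℤ) (x : X), π (T g x) = S g (π x)) :
    (∀ ε > (0 : ℝ), IsClosed (NDl2 T π ε)) ∧
      IsClosed (⋂ ε > (0 : ℝ), NDl2 T π ε) := by
  have hπT : ∀ g x y, π x = π y → π (T g x) = π (T g y) := fun g x y hxy => by
    rw [hπeq, hπeq, hxy]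
  have hclosed : ∀ ε > (0 : ℝ), IsClosed (NDl2 T π ε) := fun ε hε =>
    isClosed_NDl2 hTc hTadd hπc hπT hε
  exact ⟨hclosed, isClosed_iInter fun ε => isClosed_iInter (hclosed ε)⟩

/-- For a factor map `π` between `ℤ^d`-systems, each `ND_{ℓ²}(X,ε,π)` is a closed subset of
the unit sphere, and hence so is `ND_{ℓ²}(X,π) = ⋂_{ε>0} ND_{ℓ²}(X,ε,π)`. -/
theorem NDl2_isClosed
    {d : ℕ} {X Y : Type*} [MetricSpace X] [CompactSpace X] [MetricSpace Y] [CompactSpace Y]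
    (T : (Fin d → ℤ) → X → X)
    (hTc : ∀ g, Continuous (T g))
    (hTadd : ∀ (g h : Fin d → ℤ) (x : X), T g (T h x) = T (g + h) x)
    (hTzero : ∀ x : X, T 0 x = x)
    (S : (Fin d → ℤ) → Y → Y)
    (hSc : ∀ g, Continuous (S g))
    (hSadd : ∀ (g h : Fin d → ℤ) (y : Y), S g (S h y) = S (g + h) y)
    (hSzero : ∀ y : Y, S 0 y = y)
    (π : X → Y) (hπc : Continuous π) (hπs : Function.Surjective π)
    (hπeq : ∀ (g : Fin d → ℤ) (x : X), π (T g x) = S g (π x)) :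
    (∀ ε > (0 : ℝ), IsClosed (NDl2 T π ε)) ∧
      IsClosed (⋂ ε > (0 : ℝ), NDl2 T π ε) :=
  NDl2_isClosed_general T hTc hTadd S π hπc hπeq
end

section
/- Let G be a countable group, A a finite set, and X ⊆ A^G a G-subshift with shift action T. Let N be a finitely generated subgroup of the centralizer Cent_{Homeo(X)}(⟨T⟩) of the shift action inside the group of self-homeomorphisms of X. If every N-orbit in X is finite, then N is a finite group. -/
/-!
For a closed set `Z ⊆ X` invariant under `N` and the shift, let `K Z ≤ N` be its pointwise
stabilizer. A finitely generated group has a finite-index subgroup contained in all subgroups of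
index `≤ n` (the common kernel of its finitely many actions on `Fin n`), so `K Z` has finite index
once all `N`-orbits in `Z` have at most `n` points. By Zorn's lemma this holds for every such `Z`,
in particular for `Z = X`, where `K X` is trivial. Chains pass the property down by compactness:
an element commuting with the shift fixes a shift-invariant set as soon as it fixes the
`1`-coordinate there, and the points where a generator moves the `1`-coordinate form a clopen set.
A minimal counterexample `Z` is ruled out by Baire's theorem: some closed set of points of `Z`
with orbits of size `≤ n` has interior in `Z`, and removing that interior leaves a proper closed
invariant subset.
-/

open Metric Filter Topology

/-- The group of self-homeomorphisms of a topological space, under composition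
(`f * g = f ∘ g`). -/
instance homeomorphGroup {Z : Type*} [TopologicalSpace Z] : Group (Z ≃ₜ Z) where
  mul f g := g.trans f
  one := Homeomorph.refl Z
  inv := Homeomorph.symm
  mul_assoc _ _ _ := Homeomorph.ext fun _ => rfl
  one_mul _ := Homeomorph.ext fun _ => rfl
  mul_one _ := Homeomorph.ext fun _ => rfl
  inv_mul_cancel f := Homeomorph.ext f.symm_apply_apply

open MulAction Set Function

instance MonoidHom.finite_of_groupFG {H M : Type*} [Group H] [Group.FG H] [Monoid M] [Finite M] :
    Finite (H →* M) := by
  obtain ⟨S, hS⟩ := Group.FG.out (G := H)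
  exact Finite.of_injective (fun f : H →* M => fun s : S => f s)
    fun f g hfg => MonoidHom.eq_of_eqOn_dense hS fun s hs => congrFun hfg ⟨s, hs⟩

theorem Subgroup.finiteIndex_iInf_ker (H M : Type*) [Group H] [Group.FG H] [Group M] [Finite M] :
    (⨅ ψ : H →* M, ψ.ker).FiniteIndex :=
  Subgroup.finiteIndex_iInf fun ψ => Subgroup.finiteIndex_ker ψ

section OrbitSize

variable {N Y : Type*} [Group N] [MulAction N Y]

theorem iInf_ker_le_stabilizer_of_encard_orbit_le {n : ℕ} {y : Y}
    (hy : (orbit N y).encard ≤ n) :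
    ⨅ ψ : N →* Equiv.Perm (Fin n), ψ.ker ≤ stabilizer N y := by
  obtain ⟨hfin, hcard⟩ := encard_le_coe_iff_finite_ncard_le.mp hy
  have := hfin.fintype
  obtain ⟨e⟩ : Nonempty (orbit N y ↪ Fin n) := Function.Embedding.nonempty_of_card_le <| by
    rwa [Fintype.card_fin, ← Nat.card_eq_fintype_card, Nat.card_coe_set_eq]
  intro γ hγ
  have hker := Subgroup.mem_iInf.mp hγ
    ((Equiv.Perm.viaEmbeddingHom e).comp (toPermHom N (orbit N y)))
  have hγ1 : toPermHom N (orbit N y) γ = 1 :=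
    Equiv.Perm.viaEmbeddingHom_injective e (by simpa using hker)
  exact congrArg Subtype.val (Equiv.Perm.ext_iff.mp hγ1 ⟨y, mem_orbit_self y⟩)

theorem finiteIndex_fixingSubgroup_of_encard_orbit_le [Group.FG N] {n : ℕ} {Z : Set Y}
    (hZ : ∀ z ∈ Z, (orbit N z).encard ≤ n) : (fixingSubgroup N Z).FiniteIndex :=
  have := Subgroup.finiteIndex_iInf_ker N (Equiv.Perm (Fin n))
  Subgroup.finiteIndex_of_le fun _ hγ => (mem_fixingSubgroup_iff N).mpr fun z hz =>
    iInf_ker_le_stabilizer_of_encard_orbit_le (hZ z hz) hγ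

theorem encard_orbit_le_iff {n : ℕ} {y : Y} :
    (orbit N y).encard ≤ n ↔ ∀ f : Fin (n + 1) → N, ¬ Injective (f · • y) := by
  constructor
  · intro hy f hf
    have h := hf.encard_range.trans
      (encard_le_encard (range_subset_iff.mpr fun i => mem_orbit y (f i)))
    simp only [ENat.card_eq_coe_fintype_card, Fintype.card_fin] at h
    have := h.trans hy
    norm_cast at this
    omega
  · intro h
    by_contra! hy
    obtain ⟨e, -⟩ := Fin.Embedding.exists_embedding_disjoint_range_of_add_le_ENat_card
      (s := (∅ : Set (orbit N y))) (n := n + 1) (by simpa using Order.add_one_le_of_lt hy)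
    choose f hf using fun i => mem_orbit_iff.mp (e i).2
    exact h f fun i j hij => e.injective (Subtype.ext (by simpa [hf] using hij))

variable [TopologicalSpace Y]

theorem isClosed_setOf_encard_orbit_le [T2Space Y] [ContinuousConstSMul N Y] (n : ℕ) :
    IsClosed {y : Y | (orbit N y).encard ≤ n} := by
  have : {y : Y | (orbit N y).encard ≤ n} = ⋂ f : Fin (n + 1) → N,
      ⋃ p : {p : Fin (n + 1) × Fin (n + 1) // p.1 ≠ p.2},
        {y | f p.1.1 • y = f p.1.2 • y} := by
    ext y
    simp [encard_orbit_le_iff, Injective, and_comm]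
  rw [this]
  exact isClosed_iInter fun f => isClosed_iUnion_of_finite fun p =>
    isClosed_eq (continuous_const_smul _) (continuous_const_smul _)

end OrbitSize

open scoped Pointwise

theorem IsCompact.exists_mem_disjoint_of_isChain {X : Type*} [TopologicalSpace X]
    {K : Set X} (hK : IsCompact K) {c : Set (Set X)} (hc : IsChain (· ⊆ ·) c) (hne : c.Nonempty)
    (hcl : ∀ Z ∈ c, IsClosed Z) (hdisj : Disjoint K (⋂₀ c)) :
    ∃ Z ∈ c, Disjoint K Z := by
  have := hne.to_subtype
  obtain ⟨Z, hZ⟩ := hK.elim_directed_family_closed (fun Z : c => Z.1) (fun Z => hcl Z Z.2)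
    (by rw [← sInter_eq_iInter]; exact hdisj.inter_eq)
    (directedOn_iff_directed.mp (IsChain.directedOn (r := fun s t : Set X => t ⊆ s) hc.symm))
  exact ⟨Z, Z.2, disjoint_iff_inter_eq_empty.mpr hZ⟩

theorem IsCompact.exists_not_subset_closure_sdiff {X : Type*} [TopologicalSpace X] [T2Space X]
    {m : Set X} (hm : IsCompact m) (hne : m.Nonempty) {F : ℕ → Set X}
    (hF : ∀ n, IsClosed (F n)) (hcover : m ⊆ ⋃ n, F n) :
    ∃ n, ¬ m ⊆ closure (m \ F n) := by
  by_contra! hdense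
  have := isCompact_iff_compactSpace.mp hm
  have := hne.to_subtype
  have hopen (n : ℕ) : IsOpen ((↑) ⁻¹' (F n)ᶜ : Set m) :=
    (hF n).isOpen_compl.preimage continuous_subtype_val
  have hd (n : ℕ) : Dense ((↑) ⁻¹' (F n)ᶜ : Set m) := by
    rw [Subtype.dense_iff, Subtype.image_preimage_coe]
    exact hdense n
  obtain ⟨⟨y, hym⟩, hy⟩ := (dense_iInter_of_isOpen hopen hd).nonempty
  obtain ⟨n, hn⟩ := mem_iUnion.mp (hcover hym)
  exact mem_iInter.mp hy n hn

section CommutingActions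

variable {N G Y : Type*} [Group N] [Group G] [MulAction N Y] [MulAction G Y]

theorem encard_orbit_smul_comm [SMulCommClass N G Y] (g : G) (y : Y) :
    (orbit N (g • y)).encard = (orbit N y).encard := by
  have : orbit N (g • y) = g • orbit N y := by
    simp only [orbit, smul_set_range, smul_comm]
  rw [this, encard_smul_set]

theorem mem_fixingSubgroup_of_forall_apply_smul_eq [SMulCommClass N G Y] {A : Type*} {f : Y → A}
    (hf : ∀ x y : Y, (∀ g : G, f (g • x) = f (g • y)) → x = y) {Z : Set Y}
    (hZ : ∀ g : G, ∀ z ∈ Z, g • z ∈ Z) {γ : N} (hγ : ∀ z ∈ Z, f (γ • z) = f z) :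
    γ ∈ fixingSubgroup N Z :=
  (mem_fixingSubgroup_iff N).mpr fun z hz => hf _ _ fun g => by
    rw [← smul_comm γ g z]
    exact hγ _ (hZ g z hz)

variable (N G) [TopologicalSpace Y]

structure IsClosedInvariant (Z : Set Y) : Prop where
  isClosed : IsClosed Z
  smul_mem : ∀ (γ : N), ∀ z ∈ Z, γ • z ∈ Z
  smul_mem' : ∀ (g : G), ∀ z ∈ Z, g • z ∈ Z

variable {N G}

theorem IsClosedInvariant.sInter {c : Set (Set Y)} (hc : ∀ Z ∈ c, IsClosedInvariant N G Z) :
    IsClosedInvariant N G (⋂₀ c) where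
  isClosed := isClosed_sInter fun Z hZ => (hc Z hZ).isClosed
  smul_mem γ _ hz := mem_sInter.mpr fun Z hZ => (hc Z hZ).smul_mem γ _ (mem_sInter.mp hz Z hZ)
  smul_mem' g _ hz := mem_sInter.mpr fun Z hZ => (hc Z hZ).smul_mem' g _ (mem_sInter.mp hz Z hZ)

theorem IsClosedInvariant.closure_sdiff [ContinuousConstSMul N Y] [ContinuousConstSMul G Y]
    {m F : Set Y} (hm : IsClosedInvariant N G m) (hF : ∀ (γ : N) y, γ • y ∈ F ↔ y ∈ F)
    (hF' : ∀ (g : G) y, g • y ∈ F ↔ y ∈ F) : IsClosedInvariant N G (closure (m \ F)) where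
  isClosed := isClosed_closure
  smul_mem γ _ hz := map_mem_closure (continuous_const_smul γ) hz
    fun y hy => ⟨hm.smul_mem γ y hy.1, (hF γ y).not.mpr hy.2⟩
  smul_mem' g _ hz := map_mem_closure (continuous_const_smul g) hz
    fun y hy => ⟨hm.smul_mem' g y hy.1, (hF' g y).not.mpr hy.2⟩

end CommutingActions

section FiniteOrbits

variable {N G Y A : Type*} [Group N] [Group G] [MulAction N Y] [MulAction G Y]
  [SMulCommClass N G Y] [TopologicalSpace Y] [CompactSpace Y] [ContinuousConstSMul N Y] [Group.FG N]

theorem exists_finiteIndex_fixingSubgroup_of_isChain [TopologicalSpace A] [DiscreteTopology A]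
    {f : Y → A} (hf : Continuous f)
    (hsep : ∀ x y : Y, (∀ g : G, f (g • x) = f (g • y)) → x = y)
    {c : Set (Set Y)} (hc : IsChain (· ⊆ ·) c) (hne : c.Nonempty)
    (hcl : ∀ Z ∈ c, IsClosedInvariant N G Z) (hfi : (fixingSubgroup N (⋂₀ c)).FiniteIndex) :
    ∃ Z ∈ c, (fixingSubgroup N Z).FiniteIndex := by
  obtain ⟨S, hS, hSfin⟩ := (Subgroup.fg_iff _).mp
    ((Group.fg_iff_subgroup_fg _).mp (Subgroup.fg_of_index_ne_zero (fixingSubgroup N (⋂₀ c))))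
  have hSfix : S ⊆ fixingSubgroup N (⋂₀ c) := hS ▸ Subgroup.subset_closure
  set Δ := ⋃ s ∈ S, {y | f (s • y) ≠ f y}
  have hΔ : IsClosed Δ := hSfin.isClosed_biUnion fun s _ =>
    (isClosed_discrete {p : A × A | p.1 ≠ p.2}).preimage
      ((hf.comp (continuous_const_smul s)).prodMk hf)
  have hΔc : Disjoint Δ (⋂₀ c) := by
    refine disjoint_left.mpr fun y hy hyc => ?_
    obtain ⟨s, hs, hsy⟩ := mem_iUnion₂.mp hy
    exact hsy (congrArg f ((mem_fixingSubgroup_iff N).mp (hSfix hs) y hyc))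
  obtain ⟨Z, hZc, hZ⟩ := hΔ.isCompact.exists_mem_disjoint_of_isChain hc hne
    (fun Z hZ => (hcl Z hZ).isClosed) hΔc
  refine ⟨Z, hZc, Subgroup.finiteIndex_of_le (H := fixingSubgroup N (⋂₀ c)) ?_⟩
  rw [← hS, Subgroup.closure_le]
  exact fun s hs => mem_fixingSubgroup_of_forall_apply_smul_eq hsep (hcl Z hZc).smul_mem'
    fun z hz => not_not.mp fun hsz => disjoint_left.mp hZ (mem_iUnion₂.mpr ⟨s, hs, hsz⟩) hz

theorem finiteIndex_fixingSubgroup_of_forall_ssubset [T2Space Y] [ContinuousConstSMul G Y]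
    (horb : ∀ y : Y, (orbit N y).Finite) {m : Set Y} (hm : IsClosedInvariant N G m)
    (hmin : ∀ Z ⊂ m, IsClosedInvariant N G Z → (fixingSubgroup N Z).FiniteIndex) :
    (fixingSubgroup N m).FiniteIndex := by
  rcases m.eq_empty_or_nonempty with rfl | hne
  · rw [fixingSubgroup_empty]
    infer_instance
  set F : ℕ → Set Y := fun n => {y | (orbit N y).encard ≤ n}
  obtain ⟨n, hn⟩ := hm.isClosed.isCompact.exists_not_subset_closure_sdiff hne
    (fun n => isClosed_setOf_encard_orbit_le n)
    (fun y _ => mem_iUnion.mpr ⟨_, (horb y).cast_ncard_eq.ge⟩)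
  -- by Baire, `m ∩ F n` has interior in `m`; removing it leaves a proper closed invariant set
  have hZ : IsClosedInvariant N G (closure (m \ F n)) :=
    hm.closure_sdiff (fun γ y => by simp only [F, mem_ofPred_eq, orbit_smul])
      (fun g y => by simp only [F, mem_ofPred_eq, encard_orbit_smul_comm])
  have hZm : closure (m \ F n) ⊂ m :=
    ⟨closure_minimal sdiff_subset hm.isClosed, hn⟩
  have := hmin _ hZm hZ
  have := finiteIndex_fixingSubgroup_of_encard_orbit_le (N := N) (Z := F n) fun _ hy => hy
  refine Subgroup.finiteIndex_of_le
    (H := fixingSubgroup N (closure (m \ F n)) ⊓ fixingSubgroup N (F n)) ?_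
  rw [← fixingSubgroup_union]
  exact fixingSubgroup_antitone N Y fun y hy =>
    (em (y ∈ F n)).elim Or.inr fun hyF => Or.inl (subset_closure ⟨hy, hyF⟩)

theorem finiteIndex_fixingSubgroup_of_isClosedInvariant [T2Space Y] [ContinuousConstSMul G Y]
    [TopologicalSpace A] [DiscreteTopology A] {f : Y → A} (hf : Continuous f)
    (hsep : ∀ x y : Y, (∀ g : G, f (g • x) = f (g • y)) → x = y)
    (horb : ∀ y : Y, (orbit N y).Finite) {Z : Set Y} (hZ : IsClosedInvariant N G Z) :
    (fixingSubgroup N Z).FiniteIndex := by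
  by_contra hZfi
  obtain ⟨m, -, hm⟩ := zorn_superset_nonempty
    {Z | IsClosedInvariant N G Z ∧ ¬ (fixingSubgroup N Z).FiniteIndex}
    (fun c hc hchain hne => ⟨⋂₀ c, ⟨.sInter fun Z hZ => (hc hZ).1, fun hfi => by
      obtain ⟨Z, hZc, hZfi⟩ := exists_finiteIndex_fixingSubgroup_of_isChain hf hsep hchain hne
        (fun Z hZ => (hc hZ).1) hfi
      exact (hc hZc).2 hZfi⟩, fun _ => sInter_subset_of_mem⟩) Z ⟨hZ, hZfi⟩
  exact hm.prop.2 <| finiteIndex_fixingSubgroup_of_forall_ssubset horb hm.prop.1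
    fun Z hZm hZ => not_not.mp fun hZfi => hZm.not_superset (hm.2 ⟨hZ, hZfi⟩ hZm.le)

theorem finite_of_forall_finite_orbit [T2Space Y] [ContinuousConstSMul G Y] [FaithfulSMul N Y]
    [TopologicalSpace A] [DiscreteTopology A] {f : Y → A} (hf : Continuous f)
    (hsep : ∀ x y : Y, (∀ g : G, f (g • x) = f (g • y)) → x = y)
    (horb : ∀ y : Y, (orbit N y).Finite) : Finite N := by
  have hfi := finiteIndex_fixingSubgroup_of_isClosedInvariant hf hsep horb (Z := univ)
    ⟨isClosed_univ, fun _ _ _ => mem_univ _, fun _ _ _ => mem_univ _⟩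
  have hbot : fixingSubgroup N (univ : Set Y) = ⊥ :=
    (Subgroup.eq_bot_iff_forall _).mpr fun γ hγ => eq_of_smul_eq_smul fun y =>
      ((mem_fixingSubgroup_iff N).mp hγ y trivial).trans (one_smul N y).symm
  rw [hbot] at hfi
  exact Nat.finite_of_card_ne_zero (Subgroup.index_bot (G := N) ▸ hfi.index_ne_zero)

end FiniteOrbits

instance Homeomorph.applyMulAction {Z : Type*} [TopologicalSpace Z] : MulAction (Z ≃ₜ Z) Z where
  smul f x := f x
  one_smul _ := rfl
  mul_smul _ _ _ := rfl

instance Homeomorph.applyFaithfulSMul {Z : Type*} [TopologicalSpace Z] :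
    FaithfulSMul (Z ≃ₜ Z) Z :=
  ⟨Homeomorph.ext⟩

instance Homeomorph.continuousConstSMul {Z : Type*} [TopologicalSpace Z] :
    ContinuousConstSMul (Z ≃ₜ Z) Z :=
  ⟨Homeomorph.continuous⟩

instance Subgroup.continuousConstSMul {M Z : Type*} [Group M] [MulAction M Z] [TopologicalSpace Z]
    [ContinuousConstSMul M Z] (S : Subgroup M) : ContinuousConstSMul S Z :=
  ⟨fun γ => continuous_const_smul (γ : M)⟩

abbrev subshiftAction {G A : Type*} [Group G] (X : Set (G → A))
    (hX : ∀ x ∈ X, ∀ g : G, (fun h => x (h * g)) ∈ X) : MulAction G X where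
  smul g x := ⟨fun h => x.1 (h * g), hX x.1 x.2 g⟩
  one_smul x := Subtype.ext (funext fun h => congrArg x.1 (mul_one h))
  mul_smul g g' x := Subtype.ext (funext fun h => congrArg x.1 (mul_assoc h g g').symm)

theorem fg_centralizer_subgroup_with_finite_orbits_is_finite_general
    {G : Type*} [Group G]
    {A : Type*} [TopologicalSpace A] [DiscreteTopology A] [Finite A]
    (X : Set (G → A)) (hXclosed : IsClosed X)
    (hXinv : ∀ x ∈ X, ∀ g : G, (fun h => x (h * g)) ∈ X)
    (N : Subgroup (↥X ≃ₜ ↥X)) (hNfg : Subgroup.FG N)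
    -- every element of `N` commutes with every shift map
    (hNcomm : ∀ φ ∈ N, ∀ (g : G) (x : ↥X) (h : G),
      (φ ⟨fun h' => x.1 (h' * g), hXinv x.1 x.2 g⟩ : G → A) h = (φ x : G → A) (h * g))
    -- every `N`-orbit is finite
    (horb : ∀ x : ↥X, {y : ↥X | ∃ φ ∈ N, φ x = y}.Finite) :
    (N : Set (↥X ≃ₜ ↥X)).Finite := by
  let := subshiftAction X hXinv
  have : CompactSpace X := isCompact_iff_compactSpace.mp hXclosed.isCompact
  have : ContinuousConstSMul G X := ⟨fun g =>
    (continuous_pi fun h => (continuous_apply (h * g)).comp continuous_subtype_val).subtype_mk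
      fun x : X => hXinv x.1 x.2 g⟩
  have : SMulCommClass N G X := ⟨fun γ g x => Subtype.ext (funext (hNcomm γ γ.2 g x))⟩
  have : Group.FG N := (Group.fg_iff_subgroup_fg N).mpr hNfg
  have hsep (x y : X) (hxy : ∀ g : G, x.1 (1 * g) = y.1 (1 * g)) : x = y :=
    Subtype.ext (funext fun g => by simpa using hxy g)
  have := finite_of_forall_finite_orbit (N := N) (G := G)
    ((continuous_apply 1).comp continuous_subtype_val) hsep
    fun x => (horb x).subset fun _ ⟨γ, hγ⟩ => ⟨γ, γ.2, hγ⟩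
  exact Set.finite_coe_iff.mp this

/-- Let `X ⊆ A^G` be a `G`-subshift (`G` countable, `A` finite) and `N` a finitely
generated subgroup of the centralizer of the shift action inside `Homeo(X)`.
If every `N`-orbit is finite, then `N` is finite. -/
theorem fg_centralizer_subgroup_with_finite_orbits_is_finite
    {G : Type*} [Group G] [Countable G]
    {A : Type*} [TopologicalSpace A] [DiscreteTopology A] [Finite A]
    (X : Set (G → A)) (hXclosed : IsClosed X)
    (hXinv : ∀ x ∈ X, ∀ g : G, (fun h => x (h * g)) ∈ X)
    (N : Subgroup (↥X ≃ₜ ↥X)) (hNfg : Subgroup.FG N)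
    -- every element of `N` commutes with every shift map
    (hNcomm : ∀ φ ∈ N, ∀ (g : G) (x : ↥X) (h : G),
      (φ ⟨fun h' => x.1 (h' * g), hXinv x.1 x.2 g⟩ : G → A) h = (φ x : G → A) (h * g))
    -- every `N`-orbit is finite
    (horb : ∀ x : ↥X, {y : ↥X | ∃ φ ∈ N, φ x = y}.Finite) :
    (N : Set (↥X ≃ₜ ↥X)).Finite :=
  fg_centralizer_subgroup_with_finite_orbits_is_finite_general X hXclosed hXinv N hNfg hNcomm horb
end
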